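/- arXiv:1604.06919 — 3 statements merged into one kernel-verified Lean document; each statement's English description precedes it below -/
import Mathlib

section
/- In the setting of a primitive cyclic covering fibration, suppose a reduced curve R on a smooth surface undergoes a sequence of blow-ups ψ_i at points x_i with multiplicities m_i = mult_{x_i}(R_{i−1}), where the proper-transform rule is R_i = ψ_i*R_{i−1} − n⌊m_i/n⌋E_i, and each m_i lies in nℤ or nℤ+1. Then on the final surface, (K̃ + R̃)·R̃ = (K + R)·R − n·Σ_{k≥1} k(nk−1)α_k, where α_k is the number of indices i with m_i ∈ {kn, kn+1}. -/
/-- Auxiliary: expansion of the intersection pairing after blow-ups. -/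
lemma KR_expand_aux
    (M : Type*) [AddCommGroup M] [Module ℤ M]
    (b : M →ₗ[ℤ] M →ₗ[ℤ] ℤ) (p : M →ₗ[ℤ] M)
    (N : ℕ) (E : Fin N → M) (c : Fin N → ℤ)
    (hpp : ∀ A B : M, b (p A) (p B) = b A B)
    (hpE : ∀ (A : M) (i : Fin N), b (p A) (E i) = 0)
    (hEp : ∀ (i : Fin N) (A : M), b (E i) (p A) = 0)
    (hEE : ∀ i j : Fin N, b (E i) (E j) = if i = j then -1 else 0)
    (K R : M) :
    b ((p K + ∑ i, E i) + (p R - ∑ i, c i • E i))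
        (p R - ∑ i, c i • E i)
      = b (K + R) R + ∑ i, (c i - (c i)^2) := by
  simp [map_smul, map_add, map_sub, map_sum, LinearMap.add_apply,
    LinearMap.sub_apply, LinearMap.sum_apply, LinearMap.smul_apply,
    hpp, hpE, hEp, hEE, mul_ite, Finset.sum_ite_eq, Finset.sum_sub_distrib]
  have h : ∑ x : Fin N, (-c x + c x * c x)
      = (∑ x : Fin N, c x ^ 2) - ∑ x : Fin N, c x := by
    rw [← Finset.sum_sub_distrib]
    exact Finset.sum_congr rfl fun x _ => by ring
  rw [h]; ring

/-- Auxiliary: counting multiplicities grouped by `k`. -/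
lemma KR_count_aux (N n : ℕ) (hn : 2 ≤ n) (m : Fin N → ℕ)
    (hm : ∀ i, ∃ c : ℕ, m i = n * c ∨ m i = n * c + 1) :
    (n : ℤ) * ∑ k ∈ Finset.Icc 1 (Finset.univ.sup m),
        (k : ℤ) * ((n : ℤ) * k - 1) *
          ((Finset.univ.filter
              (fun i => m i = k * n ∨ m i = k * n + 1)).card : ℤ)
      = ∑ i, (((n * (m i / n) : ℕ) : ℤ) ^ 2 - ((n * (m i / n) : ℕ) : ℤ)) := by
  rw [Finset.mul_sum]
  have step1 : ∀ k ∈ Finset.Icc 1 (Finset.univ.sup m),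
      (n : ℤ) * ((k : ℤ) * ((n : ℤ) * k - 1) *
        ((Finset.univ.filter (fun i => m i = k * n ∨ m i = k * n + 1)).card : ℤ))
      = ∑ i : Fin N, (if m i = k * n ∨ m i = k * n + 1 then
          (n : ℤ) * ((k : ℤ) * ((n : ℤ) * k - 1)) else 0) := by
    intro k _
    rw [← Finset.sum_filter, Finset.sum_const, nsmul_eq_mul]
    ring
  rw [Finset.sum_congr rfl step1, Finset.sum_comm]
  refine Finset.sum_congr rfl fun i _ => ?_
  obtain ⟨d, hd⟩ := hm i
  have hdiv : m i / n = d := by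
    rcases hd with h | h
    · rw [h, Nat.mul_div_cancel_left d (by omega)]
    · rw [h, Nat.mul_add_div (by omega), Nat.div_eq_of_lt (by omega), Nat.add_zero]
  rw [hdiv]
  rcases Nat.eq_zero_or_pos d with hd0 | hd1
  · subst hd0
    rw [Finset.sum_eq_zero, Nat.mul_zero]
    · simp
    · intro k hk
      rw [Finset.mem_Icc] at hk
      have h2 : 1 * n ≤ k * n := Nat.mul_le_mul_right n hk.1
      rw [if_neg]
      rintro (h | h) <;> omega
  · have hmem : d ∈ Finset.Icc 1 (Finset.univ.sup m) := by
      rw [Finset.mem_Icc]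
      refine ⟨hd1, le_trans ?_ (Finset.le_sup (Finset.mem_univ i))⟩
      have : 1 * d ≤ n * d := Nat.mul_le_mul_right d (by omega)
      omega
    rw [Finset.sum_eq_single_of_mem d hmem]
    · rw [if_pos (by rw [mul_comm d n]; exact hd)]
      push_cast
      ring
    · intro k hk hne
      rw [Finset.mem_Icc] at hk
      rw [if_neg]
      rintro (h | h) <;>
      · rcases Nat.lt_or_ge k d with hlt | hge
        · have h2 : (k + 1) * n ≤ d * n := Nat.mul_le_mul_right n hlt
          rw [add_mul, one_mul, mul_comm d n] at h2
          rcases hd with h' | h' <;> omega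
        · have hlt' : d < k := by omega
          have h2 : (d + 1) * n ≤ k * n := Nat.mul_le_mul_right n hlt'
          rw [add_mul, one_mul, mul_comm d n] at h2
          rcases hd with h' | h' <;> omega

/-- **Transformation of `(K + R)·R` under the blow-ups of a cyclic branch
divisor.**  Model the divisor classes on `W` and `W̃` in a `ℤ`-module `M`
equipped with the intersection form `b`, with `p` the total pullback
`ψ̃*` and `𝐄 i` the total transforms of the exceptional curves, satisfying
`p A · p B = A · B`, `p A · 𝐄 i = 𝐄 i · p A = 0`, `𝐄 i · 𝐄 j = −δ_{ij}`.
Each multiplicity `m i` lies in `nℤ ∪ (nℤ+1)`, the canonical class transforms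
as `K̃ = p K + Σ 𝐄 i` and the branch curve as `R̃ = p R − Σ n⌊m i/n⌋ 𝐄 i`.
With `α k = #{i : m i = kn or kn+1}`, one has
`(K̃ + R̃)·R̃ = (K + R)·R − n Σ_{k≥1} k(nk−1) α k`. -/
theorem KR_transform_under_blowups
    (M : Type*) [AddCommGroup M] [Module ℤ M]
    (b : M →ₗ[ℤ] M →ₗ[ℤ] ℤ) (p : M →ₗ[ℤ] M)
    (N : ℕ) (E : Fin N → M) (m : Fin N → ℕ) (n : ℕ) (hn : 2 ≤ n)
    (hm : ∀ i, ∃ c : ℕ, m i = n * c ∨ m i = n * c + 1)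
    (hpp : ∀ A B : M, b (p A) (p B) = b A B)
    (hpE : ∀ (A : M) (i : Fin N), b (p A) (E i) = 0)
    (hEp : ∀ (i : Fin N) (A : M), b (E i) (p A) = 0)
    (hEE : ∀ i j : Fin N, b (E i) (E j) = if i = j then -1 else 0)
    (K R : M) :
    b ((p K + ∑ i, E i) + (p R - ∑ i, ((n * (m i / n) : ℕ) : ℤ) • E i))
        (p R - ∑ i, ((n * (m i / n) : ℕ) : ℤ) • E i)
      = b (K + R) R
        - (n : ℤ) * ∑ k ∈ Finset.Icc 1 (Finset.univ.sup m),
            (k : ℤ) * ((n : ℤ) * k - 1) *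
              ((Finset.univ.filter
                  (fun i => m i = k * n ∨ m i = k * n + 1)).card : ℤ) := by
  have h1 := KR_expand_aux M b p N E (fun i => ((n * (m i / n) : ℕ) : ℤ))
    hpp hpE hEp hEE K R
  have h2 := KR_count_aux N n hn m hm
  rw [h1, sub_eq_add_neg, h2]
  congr 1
  rw [← Finset.sum_neg_distrib]
  exact Finset.sum_congr rfl fun i _ => by ring
end

section
/- Define Ind(F_p) = K_f²(F_p) − (12(n−1)/(2n−1))·χ_f(F_p) using the local invariants of a primitive cyclic covering fibration of type (g,1,n). Then Ind(F_p) = n·Σ_{k≥1}(((n+1)(n−1)/(2n−1))k − 1)α_k + ((n−1)/(2n−1))((n+1)r − 12n)χ_φ + ((n+1)(n−1)r/(2n−1))ν + ε. Moreover, if r ≥ 12n/(n+1), n ≥ 2, and all parameters α_k ≥ 0 (with α_k integer-valued and α_1 counting singularities of multiplicity ≥ n ≥ 2 so that the coefficient ((n+1)(n−1)/(2n−1))k − 1 ≥ 0 for all k ≥ 1), χ_φ ≥ 0, ν ≥ 0, ε ≥ 0, then Ind(F_p) ≥ 0. -/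
/-!
The `α₀`-coefficients of `K_f²(F_p)` and `χ_f(F_p)` are in the ratio `12(n−1)/(2n−1)`, so they
cancel in `Ind(F_p)`. What remains is a sum of products of nonnegative factors; for the `α_k`
this is `(n+1)(n−1) ≥ 2n−1`, i.e. `n(n−2) ≥ 0`, and for `χ_φ` it is `r ≥ 12n/(n+1)`.
-/

open Finset

/-- The local contribution `K_f²(F_p)`. -/
noncomputable def localK2 (n r α0 ε χφ ν : ℝ) (N : ℕ) (α : ℕ → ℝ) : ℝ :=
  ∑ k ∈ Icc 1 N, ((n + 1) * (n - 1) * k - n) * α k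
    + (n - 1) ^ 2 / n * (α0 - 2 * ε)
    + (n + 1) * (n - 1) * r / n * (χφ + ν) + ε

/-- The local contribution `χ_f(F_p)`. -/
noncomputable def localChi (n r α0 ε χφ ν : ℝ) (N : ℕ) (α : ℕ → ℝ) : ℝ :=
  1 / 12 * (n - 1) * (n + 1) * ∑ k ∈ Icc 1 N, (k : ℝ) * α k
    + (n - 1) * (2 * n - 1) / (12 * n) * (α0 - 2 * ε)
    + (n + 1) * (n - 1) * r / (12 * n) * (χφ + ν) + n * χφ

/-- The closed form of `Ind(F_p)`. -/
noncomputable def localIndex (n r ε χφ ν : ℝ) (N : ℕ) (α : ℕ → ℝ) : ℝ :=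
  n * ∑ k ∈ Icc 1 N, ((n + 1) * (n - 1) / (2 * n - 1) * k - 1) * α k
    + (n - 1) / (2 * n - 1) * ((n + 1) * r - 12 * n) * χφ
    + (n + 1) * (n - 1) * r / (2 * n - 1) * ν + ε

theorem sum_affine_mul {ι R : Type*} [CommRing R] (s : Finset ι) (a b : R) (f g : ι → R) :
    ∑ i ∈ s, (a * f i - b) * g i = a * ∑ i ∈ s, f i * g i - b * ∑ i ∈ s, g i := by
  simp only [mul_sum, ← sum_sub_distrib, sub_mul, mul_assoc]

theorem localK2_sub_localChi_eq {n : ℝ} (hn : n ≠ 0) (h2n : 2 * n - 1 ≠ 0)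
    (r α0 ε χφ ν : ℝ) (N : ℕ) (α : ℕ → ℝ) :
    localK2 n r α0 ε χφ ν N α - 12 * (n - 1) / (2 * n - 1) * localChi n r α0 ε χφ ν N α
      = localIndex n r ε χφ ν N α := by
  have hK := sum_affine_mul (Icc 1 N) ((n + 1) * (n - 1)) n (fun k : ℕ ↦ (k : ℝ)) α
  have hInd := sum_affine_mul (Icc 1 N) ((n + 1) * (n - 1) / (2 * n - 1)) 1
    (fun k : ℕ ↦ (k : ℝ)) α
  simp only [localK2, localChi, localIndex, hK, hInd]
  generalize ∑ k ∈ Icc 1 N, (k : ℝ) * α k = A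
  generalize ∑ k ∈ Icc 1 N, α k = T
  have h2n' : n * 2 - 1 ≠ 0 := by rwa [mul_comm]
  field_simp
  ring

theorem slope_coeff_nonneg {n k : ℝ} (hn : 2 ≤ n) (hk : 1 ≤ k) :
    0 ≤ (n + 1) * (n - 1) / (2 * n - 1) * k - 1 := by
  have hcoeff : 0 ≤ (n + 1) * (n - 1) := by nlinarith
  rw [sub_nonneg, div_mul_eq_mul_div, one_le_div (by linarith)]
  nlinarith [mul_le_mul_of_nonneg_left hk hcoeff]

theorem localIndex_nonneg {n r ε χφ ν : ℝ} {N : ℕ} {α : ℕ → ℝ}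
    (hn : 2 ≤ n) (hr : 12 * n / (n + 1) ≤ r)
    (hα : ∀ k, 0 ≤ α k) (hχφ : 0 ≤ χφ) (hν : 0 ≤ ν) (hε : 0 ≤ ε) :
    0 ≤ localIndex n r ε χφ ν N α := by
  have h2n : 0 < 2 * n - 1 := by linarith
  have hr0 : 0 ≤ r := le_trans (by positivity) hr
  have hrn : 0 ≤ (n + 1) * r - 12 * n := by
    rw [div_le_iff₀ (by linarith)] at hr
    linarith
  have hsum : 0 ≤ ∑ k ∈ Icc 1 N, ((n + 1) * (n - 1) / (2 * n - 1) * k - 1) * α k :=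
    sum_nonneg fun k hk ↦ mul_nonneg
      (slope_coeff_nonneg hn (by exact_mod_cast (mem_Icc.mp hk).1)) (hα k)
  have hn1 : 0 ≤ n - 1 := by linarith
  unfold localIndex
  have hαterm : 0 ≤ n * ∑ k ∈ Icc 1 N, ((n + 1) * (n - 1) / (2 * n - 1) * k - 1) * α k := by
    positivity
  have hχφterm : 0 ≤ (n - 1) / (2 * n - 1) * ((n + 1) * r - 12 * n) * χφ := by positivity
  have hνterm : 0 ≤ (n + 1) * (n - 1) * r / (2 * n - 1) * ν := by positivity
  linarith

/-- **The local index `Ind(F_p)` of the slope equality** for primitive cyclic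
covering fibrations of type `(g,1,n)`:
`Ind(F_p) = K_f²(F_p) − (12(n−1)/(2n−1))·χ_f(F_p)` equals
`n·Σ(((n+1)(n−1)/(2n−1))k − 1)α_k + ((n−1)/(2n−1))((n+1)r − 12n)χ_φ
 + ((n+1)(n−1)r/(2n−1))ν + ε` (the `α₀`-terms cancel), and if
`r ≥ 12n/(n+1)` and all parameters `α_k, χ_φ, ν, ε` are nonnegative, then
`Ind(F_p) ≥ 0`. -/
theorem local_index_formula_and_nonneg
    (n r α0 ε χφ ν Kf2p χfp : ℝ) (N : ℕ) (α : ℕ → ℝ)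
    (hn : 2 ≤ n) (hr : 12 * n / (n + 1) ≤ r)
    (hα : ∀ k, 0 ≤ α k) (hχφ : 0 ≤ χφ) (hν : 0 ≤ ν) (hε : 0 ≤ ε)
    (hK : Kf2p = ∑ k ∈ Icc 1 N, ((n + 1) * (n - 1) * k - n) * α k
      + (n - 1) ^ 2 / n * (α0 - 2 * ε)
      + (n + 1) * (n - 1) * r / n * (χφ + ν) + ε)
    (hχ : χfp = 1 / 12 * (n - 1) * (n + 1) * ∑ k ∈ Icc 1 N, (k : ℝ) * α k
      + (n - 1) * (2 * n - 1) / (12 * n) * (α0 - 2 * ε)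
      + (n + 1) * (n - 1) * r / (12 * n) * (χφ + ν) + n * χφ) :
    Kf2p - 12 * (n - 1) / (2 * n - 1) * χfp
      = n * ∑ k ∈ Icc 1 N, ((n + 1) * (n - 1) / (2 * n - 1) * k - 1) * α k
        + (n - 1) / (2 * n - 1) * ((n + 1) * r - 12 * n) * χφ
        + (n + 1) * (n - 1) * r / (2 * n - 1) * ν + ε
    ∧ 0 ≤ Kf2p - 12 * (n - 1) / (2 * n - 1) * χfp := by
  have hIndex : Kf2p - 12 * (n - 1) / (2 * n - 1) * χfp = localIndex n r ε χφ ν N α := by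
    subst hK hχ
    exact localK2_sub_localChi_eq (by linarith) (by linarith) r α0 ε χφ ν N α
  exact ⟨hIndex, hIndex ▸ localIndex_nonneg hn hr hα hχφ hν hε⟩
end

section
/- Let r ≥ 6 be a multiple of 3 and set μ = 72(r−1)/(4r² − 15r + 27 − 36δ), where δ = 0 if 6 | r and δ = 1 otherwise, μ' = μ/(6(r−1)) (i.e., (n−1)μ/(12(r−1)) with n = 3), A₃ = 2 − ((5r−9)/3)μ', and B₃ = 3 − ((n+1)(r²−δn²)/(4n))μ' with n = 3, i.e., B₃ = 3 − ((r²−9δ)/3)μ'. Then: (a) A₃ > 0; (b) B₃ > 0; (c) −(3/2)A₃ + 2B₃ − 1 = 0; (d) 2A₃ − B₃ > 0; (e) −A₃ + 2B₃ > 0. -/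
/-- **Coefficient identities and inequalities for type `(g,0,3)`.**
Let `r ≥ 6` be a multiple of `3`, `δ = 0` if `6 ∣ r` and `δ = 1` otherwise,
`μ = 72(r−1)/(4r² − 15r + 27 − 36δ)`, `μ' = μ/(6(r−1))`,
`A₃ = 2 − ((5r−9)/3)μ'` and `B₃ = 3 − ((r²−9δ)/3)μ'`.  Then
(a) `A₃ > 0`; (b) `B₃ > 0`; (c) `−(3/2)A₃ + 2B₃ − 1 = 0`;
(d) `2A₃ − B₃ > 0`; (e) `−A₃ + 2B₃ > 0`. -/
theorem g03_coefficients (r : ℕ) (hr : 6 ≤ r) (h3 : 3 ∣ r) :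
    let rq : ℚ := r
    let δ : ℚ := if 6 ∣ r then 0 else 1
    let μ : ℚ := 72 * (rq - 1) / (4 * rq ^ 2 - 15 * rq + 27 - 36 * δ)
    let μ' : ℚ := μ / (6 * (rq - 1))
    let A : ℚ := 2 - (5 * rq - 9) / 3 * μ'
    let B : ℚ := 3 - (rq ^ 2 - 9 * δ) / 3 * μ'
    0 < A ∧ 0 < B ∧ -(3 / 2) * A + 2 * B - 1 = 0 ∧ 0 < 2 * A - B ∧ 0 < -A + 2 * B := by
  intro rq δ μ μ' A B
  have hrq : (6 : ℚ) ≤ rq := by unfold rq; exact_mod_cast hr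
  have hδ : δ = 0 ∨ δ = 1 := by
    unfold δ; split <;> simp
  have hδ0 : 0 ≤ δ := by rcases hδ with h | h <;> simp [h]
  have hδ1 : δ ≤ 1 := by rcases hδ with h | h <;> simp [h]
  have hD : 0 < 4 * rq ^ 2 - 15 * rq + 27 - 36 * δ := by nlinarith
  have hr1 : 0 < rq - 1 := by linarith
  have hμ' : μ' = 12 / (4 * rq ^ 2 - 15 * rq + 27 - 36 * δ) := by
    unfold μ' μ
    field_simp
    ring
  have hA : A = (8 * rq ^ 2 - 50 * rq + 90 - 72 * δ) / (4 * rq ^ 2 - 15 * rq + 27 - 36 * δ) := by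
    unfold A; rw [hμ', eq_div_iff hD.ne', sub_mul, mul_assoc, div_mul_cancel₀ _ hD.ne']; ring
  have hB : B = (8 * rq ^ 2 - 45 * rq + 81 - 72 * δ) / (4 * rq ^ 2 - 15 * rq + 27 - 36 * δ) := by
    unfold B; rw [hμ', eq_div_iff hD.ne', sub_mul, mul_assoc, div_mul_cancel₀ _ hD.ne']; ring
  refine ⟨?_, ?_, ?_, ?_, ?_⟩
  · rw [hA]; apply div_pos ?_ hD; nlinarith
  · rw [hB]; apply div_pos ?_ hD; nlinarith
  · rw [hA, hB]; rw [mul_div_assoc', mul_div_assoc', ← add_div, div_sub_one hD.ne', div_eq_zero_iff]; left; ring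
  · rw [hA, hB, mul_div_assoc', div_sub_div_same]
    apply div_pos ?_ hD
    have h9 : δ = 0 ∨ 9 ≤ rq := by
      unfold δ
      split
      · exact Or.inl rfl
      · right
        have : r ≠ 6 := by rintro rfl; simp_all
        have : 9 ≤ r := by omega
        unfold rq; exact_mod_cast this
    rcases h9 with h | h
    · rw [h]; nlinarith
    · nlinarith
  · rw [hA, hB, ← neg_div, mul_div_assoc', ← add_div]
    apply div_pos ?_ hD
    nlinarith
end
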